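/- In a simple WNM-algebra with more than two elements, ¬x = ¬y for all x, y with 0 < x, y < 1; in particular the algebra has a coatom, namely u = ¬x for any 0 < x < 1. -/

import Mathlib

class ResLat (A : Type*) extends Lattice A, CommMonoid A where
  rbot : A
  himp : A → A → A
  rbot_le : ∀ a : A, rbot ≤ a
  le_one : ∀ a : A, a ≤ 1
  resid : ∀ a b c : A, a * b ≤ c ↔ a ≤ himp b c

namespace ResLat

variable {A : Type*} [ResLat A]

def rneg (a : A) : A := himp a rbot

def Nilpotent (a : A) : Prop := ∃ n : ℕ, 1 ≤ n ∧ a ^ n = rbot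

def Unity (a : A) : Prop := ∀ n : ℕ, 1 ≤ n → Nilpotent (rneg (a ^ n))

def ImpFilter (F : Set A) : Prop :=
  (1 : A) ∈ F ∧ ∀ x y : A, x ∈ F → himp x y ∈ F → y ∈ F

def MaxImpFilter (F : Set A) : Prop :=
  ImpFilter F ∧ F ≠ Set.univ ∧
    ∀ G : Set A, ImpFilter G → F ⊆ G → G = F ∨ G = Set.univ

def Rad (A : Type*) [ResLat A] : Set A :=
  { x | ∀ F : Set A, MaxImpFilter F → x ∈ F }

def Ds (A : Type*) [ResLat A] : Set A := { x | rneg x = rbot }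

def Simple (A : Type*) [ResLat A] : Prop :=
  Nontrivial A ∧ ∀ F : Set A, ImpFilter F → F = {1} ∨ F = Set.univ

def IsHom {B : Type*} [ResLat B] (f : A → B) : Prop :=
  (∀ x y : A, f (x * y) = f x * f y) ∧
  (∀ x y : A, f (himp x y) = himp (f x) (f y)) ∧
  (∀ x y : A, f (x ⊓ y) = f x ⊓ f y) ∧
  (∀ x y : A, f (x ⊔ y) = f x ⊔ f y) ∧
  f rbot = rbot ∧ f 1 = 1

end ResLat

open ResLat

/-!
A simple residuated lattice has no proper nontrivial implicative filter, so the filter generated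
by any `a ≠ 1` is everything: `a ^ n = 0` for some `n`. Together with prelinearity this makes
`A` a chain, and the WNM identity applied to `x ⊓ x` then forces `x * x = 0` for `0 < x < 1`
(the alternative `x * x = x` would make `x` idempotent and nilpotent at once). Hence
`z * x ≤ min z x ^ 2 = 0` for all `z, x < 1`, i.e. every `z < 1` lies below `¬x`, while `¬x < 1`
as soon as `x > 0`.
-/

namespace ResLat

variable {A : Type*} [ResLat A]

theorem mul_le_mul_of_le_left {a b : A} (h : a ≤ b) (c : A) : a * c ≤ b * c :=
  (resid a c (b * c)).mpr (h.trans ((resid b c (b * c)).mp le_rfl))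

theorem mul_le_mul_of_le_right {a b : A} (h : a ≤ b) (c : A) : c * a ≤ c * b := by
  simpa only [mul_comm c] using mul_le_mul_of_le_left h c

theorem mul_le_right (a b : A) : a * b ≤ b := by
  simpa only [one_mul] using mul_le_mul_of_le_left (le_one a) b

theorem mul_le_left (a b : A) : a * b ≤ a :=
  mul_comm a b ▸ mul_le_right b a

theorem himp_mul_le (a b : A) : himp a b * a ≤ b :=
  (resid _ a b).mpr le_rfl

theorem himp_eq_one_iff {a b : A} : himp a b = 1 ↔ a ≤ b := by
  rw [← one_mul a, resid, one_mul]
  exact ⟨fun h => h.ge, fun h => (le_one _).antisymm h⟩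

theorem rbot_mul (a : A) : rbot * a = rbot :=
  ((resid _ _ _).mpr (rbot_le _)).antisymm (rbot_le _)

theorem rneg_lt_one {x : A} (hx : rbot < x) : rneg x < 1 :=
  (le_one _).lt_of_ne fun h => hx.ne' ((himp_eq_one_iff.mp h).antisymm (rbot_le x))

theorem mul_sup (a b c : A) : a * (b ⊔ c) = a * b ⊔ a * c := by
  refine le_antisymm ?_ (sup_le (mul_le_mul_of_le_right le_sup_left a)
    (mul_le_mul_of_le_right le_sup_right a))
  rw [mul_comm, resid]
  exact sup_le ((resid _ _ _).mp (mul_comm a b ▸ le_sup_left))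
    ((resid _ _ _).mp (mul_comm a c ▸ le_sup_right))

theorem sup_pow_eq_one {a b : A} (h : a ⊔ b = 1) : ∀ n : ℕ, a ⊔ b ^ n = 1
  | 0 => (le_one _).antisymm (pow_zero b ▸ le_sup_right)
  | n + 1 => by
      have expand : (a ⊔ b) * (a ⊔ b ^ n) ≤ a ⊔ b ^ (n + 1) := by
        rw [mul_sup, mul_comm _ a, mul_comm _ (b ^ n), mul_sup, mul_sup, ← pow_succ]
        exact sup_le (sup_le ((mul_le_left a a).trans le_sup_left)
          ((mul_le_left a b).trans le_sup_left))
          (sup_le ((mul_le_right _ a).trans le_sup_left) le_sup_right)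
      rw [h, sup_pow_eq_one h n, one_mul] at expand
      exact (le_one _).antisymm expand

theorem isImpFilter_setOf_pow_le (a : A) : ImpFilter {y : A | ∃ n : ℕ, a ^ n ≤ y} := by
  refine ⟨⟨0, (pow_zero a).le⟩, ?_⟩
  rintro x y ⟨n, hn⟩ ⟨m, hm⟩
  refine ⟨n + m, ?_⟩
  calc a ^ (n + m) = a ^ n * a ^ m := pow_add a n m
    _ ≤ x * himp x y := (mul_le_mul_of_le_left hn _).trans (mul_le_mul_of_le_right hm x)
    _ ≤ y := mul_comm x _ ▸ himp_mul_le x y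

namespace Simple

variable (hs : Simple A)
include hs

theorem exists_pow_succ_eq_rbot {a : A} (ha : a ≠ 1) : ∃ n : ℕ, a ^ (n + 1) = rbot := by
  rcases hs.2 _ (isImpFilter_setOf_pow_le a) with hone | huniv
  · exact absurd (hone ▸ ⟨1, (pow_one a).le⟩ : a ∈ ({1} : Set A)) ha
  · obtain ⟨n, hn⟩ : rbot ∈ {y : A | ∃ n : ℕ, a ^ n ≤ y} := huniv ▸ Set.mem_univ _
    exact ⟨n, by rw [pow_succ, hn.antisymm (rbot_le _), rbot_mul]⟩

theorem eq_one_of_sup_eq_one {a b : A} (h : a ⊔ b = 1) (hb : b ≠ 1) : a = 1 := by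
  obtain ⟨n, hn⟩ := hs.exists_pow_succ_eq_rbot hb
  simpa only [hn, sup_eq_left.mpr (rbot_le a)] using sup_pow_eq_one h (n + 1)

theorem le_total (hpl : ∀ x y : A, himp x y ⊔ himp y x = 1) (x y : A) : x ≤ y ∨ y ≤ x := by
  by_cases h : himp y x = 1
  · exact .inr (himp_eq_one_iff.mp h)
  · exact .inl (himp_eq_one_iff.mp (hs.eq_one_of_sup_eq_one (hpl x y) h))

theorem mul_self_eq_rbot (hwnm : ∀ x y : A, rneg (x * y) ⊔ himp (x ⊓ y) (x * y) = 1)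
    {x : A} (hx0 : rbot < x) (hx1 : x < 1) : x * x = rbot := by
  have hsup := hwnm x x
  rw [inf_idem] at hsup
  by_cases hidem : himp x (x * x) = 1
  · have hx : IsIdempotentElem x :=
      (mul_le_left x x).antisymm (himp_eq_one_iff.mp hidem)
    obtain ⟨n, hn⟩ := hs.exists_pow_succ_eq_rbot hx1.ne
    exact absurd (hx.pow_succ_eq n ▸ hn) hx0.ne'
  · exact (himp_eq_one_iff.mp (hs.eq_one_of_sup_eq_one hsup hidem)).antisymm (rbot_le _)

theorem le_rneg_of_lt_one (hpl : ∀ x y : A, himp x y ⊔ himp y x = 1)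
    (hwnm : ∀ x y : A, rneg (x * y) ⊔ himp (x ⊓ y) (x * y) = 1)
    {x z : A} (hx0 : rbot < x) (hx1 : x < 1) (hz1 : z < 1) : z ≤ rneg x := by
  refine (resid z x rbot).mp ?_
  rcases hs.le_total hpl z x with hzx | hxz
  · exact (mul_le_mul_of_le_left hzx x).trans (hs.mul_self_eq_rbot hwnm hx0 hx1).le
  · rcases (rbot_le z).eq_or_lt with hz0 | hz0
    · rw [← hz0, rbot_mul]
    · exact (mul_le_mul_of_le_right hxz z).trans (hs.mul_self_eq_rbot hwnm hz0 hz1).le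

end Simple

end ResLat

theorem stmt16_general {A : Type*} [ResLat A]
    (hpl : ∀ x y : A, himp x y ⊔ himp y x = 1)
    (hwnm : ∀ x y : A, rneg (x * y) ⊔ himp (x ⊓ y) (x * y) = 1)
    (hsimple : Simple A) :
    (∀ x y : A, rbot < x → x < 1 → rbot < y → y < 1 → rneg x = rneg y) ∧
    (∀ x : A, rbot < x → x < 1 →
      (rneg x < 1 ∧ ∀ z : A, rneg x < z → z = 1)) := by
  have le_rneg {x z : A} : rbot < x → x < 1 → z < 1 → z ≤ rneg x :=
    hsimple.le_rneg_of_lt_one hpl hwnm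
  refine ⟨fun x y hx0 hx1 hy0 hy1 => ?_, fun x hx0 hx1 => ⟨rneg_lt_one hx0, fun z hz => ?_⟩⟩
  · exact (le_rneg hy0 hy1 (rneg_lt_one hx0)).antisymm (le_rneg hx0 hx1 (rneg_lt_one hy0))
  · by_contra hz1
    exact hz.not_ge (le_rneg hx0 hx1 ((le_one z).lt_of_ne hz1))

theorem stmt16 {A : Type*} [ResLat A]
    (hpl : ∀ x y : A, himp x y ⊔ himp y x = 1)
    (hwnm : ∀ x y : A, rneg (x * y) ⊔ himp (x ⊓ y) (x * y) = 1)
    (hsimple : Simple A)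
    (hcard : ∃ a b c : A, a ≠ b ∧ a ≠ c ∧ b ≠ c) :
    (∀ x y : A, rbot < x → x < 1 → rbot < y → y < 1 → rneg x = rneg y) ∧
    (∀ x : A, rbot < x → x < 1 →
      (rneg x < 1 ∧ ∀ z : A, rneg x < z → z = 1)) :=
  stmt16_general hpl hwnm hsimple
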